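/- The minimal elements of the poset of algebraic convex geometries on a set X (ordered by inclusion of their families of closed sets) are exactly the systems Id(X, ≤) of down-sets of total orders ≤ on X. -/

import Mathlib

/-- φ is a closure operator: extensive, monotone, idempotent. -/
def IsClosureOp {X : Type*} (φ : Set X → Set X) : Prop :=
  (∀ A, A ⊆ φ A) ∧ (∀ A B, A ⊆ B → φ A ⊆ φ B) ∧ (∀ A, φ (φ A) = φ A)

/-- φ is algebraic (finitary): the closure of a set is the union of closures of its
finite subsets. -/
def IsAlgebraicOp {X : Type*} (φ : Set X → Set X) : Prop :=
  ∀ A, φ A = ⋃₀ {T | ∃ B, B ⊆ A ∧ B.Finite ∧ T = φ B}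

/-- The anti-exchange property. -/
def AntiExchange {X : Type*} (φ : Set X → Set X) : Prop :=
  ∀ (x y : X) (A : Set X), x ≠ y → φ A = A → x ∉ A →
    x ∈ φ (A ∪ {y}) → y ∉ φ (A ∪ {x})

/-- A convex geometry: a zero-closure operator with the anti-exchange property. -/
def IsConvexGeometry {X : Type*} (φ : Set X → Set X) : Prop :=
  IsClosureOp φ ∧ φ ∅ = ∅ ∧ AntiExchange φ

/-- An algebraic convex geometry. -/
def IsAlgConvexGeometry {X : Type*} (φ : Set X → Set X) : Prop :=
  IsClosureOp φ ∧ IsAlgebraicOp φ ∧ φ ∅ = ∅ ∧ AntiExchange φ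

/-- An algebraic subset of Pow X : closed under arbitrary intersections
(with ⋂₀ ∅ = X) and under unions of nonempty up-directed subfamilies. -/
def IsAlgSubset {X : Type*} (F : Set (Set X)) : Prop :=
  (∀ S ⊆ F, ⋂₀ S ∈ F) ∧
  (∀ S ⊆ F, S.Nonempty → (∀ A ∈ S, ∀ B ∈ S, ∃ C ∈ S, A ∪ B ⊆ C) → ⋃₀ S ∈ F)

/-- A maximal chain in the lattice of φ-closed sets. -/
def IsMaxChainOfClosed {X : Type*} (φ : Set X → Set X) (C : Set (Set X)) : Prop :=
  C ⊆ {Y | φ Y = Y} ∧ IsChain (· ⊆ ·) C ∧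
  ∀ T, φ T = T → (∀ A ∈ C, T ⊆ A ∨ A ⊆ T) → T ∈ C

/-- An algebraic convex geometry on X, identified with its family of closed sets. -/
def IsACGFamily {X : Type*} (F : Set (Set X)) : Prop :=
  ∃ φ : Set X → Set X, IsAlgConvexGeometry φ ∧ F = {Y | φ Y = Y}

/-!
Down-sets of a partial order are the closed sets of the down-closure operator, an algebraic
convex geometry. Conversely, fix a maximal chain `C` of closed sets of an algebraic convex
geometry `φ` and preorder `X` by `x ≼ y` iff every member of `C` containing `y` contains `x`.
Every down-set `D` is closed: for `x ∉ D`, `D` lies in the union of the members of `C` avoiding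
`x`, which is closed as `φ` is algebraic. The preorder is antisymmetric: if `x ≠ y` are not
separated by `C` and `A` is that union, maximality puts `φ (A ∪ {x})` and `φ (A ∪ {y})` into `C`,
so each contains both points, against anti-exchange. Hence every geometry contains `Id(X, ≼)` for
a total order `≼`, and `Id(X, ≤) ⊆ Id(X, ≤')` forces `≤ = ≤'`, which gives minimality.
-/

section DownSets

variable {X : Type*}

def downSets (r : X → X → Prop) : Set (Set X) :=
  {A | ∀ x y, r x y → y ∈ A → x ∈ A}

def downClosure (r : X → X → Prop) (A : Set X) : Set X :=
  {x | ∃ a ∈ A, r x a}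

variable {r s : X → X → Prop}

lemma subset_downClosure [Std.Refl r] (A : Set X) : A ⊆ downClosure r A :=
  fun x hx => ⟨x, hx, refl_of r x⟩

lemma downClosure_eq_self_iff [Std.Refl r] {A : Set X} :
    downClosure r A = A ↔ A ∈ downSets r := by
  constructor
  · intro hA x y hxy hy
    exact hA ▸ ⟨y, hy, hxy⟩
  · intro hA
    refine (Set.Subset.antisymm ?_ (subset_downClosure A))
    rintro x ⟨a, ha, hxa⟩
    exact hA x a hxa ha

lemma isAlgConvexGeometry_downClosure [IsPartialOrder X r] :
    IsAlgConvexGeometry (downClosure r) := by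
  refine ⟨⟨subset_downClosure, ?_, ?_⟩, ?_, ?_, ?_⟩
  · rintro A B hAB x ⟨a, ha, hxa⟩
    exact ⟨a, hAB ha, hxa⟩
  · intro A
    refine downClosure_eq_self_iff.2 ?_
    rintro x y hxy ⟨a, ha, hya⟩
    exact ⟨a, ha, trans_of r hxy hya⟩
  · intro A
    ext x
    constructor
    · rintro ⟨a, ha, hxa⟩
      exact ⟨_, ⟨{a}, Set.singleton_subset_iff.2 ha, Set.finite_singleton a, rfl⟩, a, rfl, hxa⟩
    · rintro ⟨_, ⟨B, hBA, -, rfl⟩, b, hb, hxb⟩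
      exact ⟨b, hBA hb, hxb⟩
  · simp [downClosure]
  · intro x y A hxy hA hxA ⟨a, ha, hxa⟩ ⟨b, hb, hyb⟩
    have hA' : A ∈ downSets r := downClosure_eq_self_iff.1 hA
    obtain ha | rfl := ha
    · exact hxA (hA' x a hxa ha)
    obtain hb | rfl := hb
    · exact hxA (hA' x b (trans_of r hxa hyb) hb)
    · exact hxy (antisymm_of r hxa hyb)

lemma isACGFamily_downSets [IsPartialOrder X r] : IsACGFamily (downSets r) :=
  ⟨downClosure r, isAlgConvexGeometry_downClosure, Set.ext fun _ => downClosure_eq_self_iff.symm⟩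

lemma eq_of_downSets_subset [IsPartialOrder X s] [Std.Total r]
    (h : downSets s ⊆ downSets r) : s = r := by
  have hrs : ∀ x y, r x y → s x y := fun x y hxy =>
    h (fun _ _ hab hb => trans_of s hab hb) x y hxy (refl_of s y)
  ext x y
  refine ⟨fun hxy => ?_, hrs x y⟩
  obtain hxy' | hyx := total_of r x y
  · exact hxy'
  · obtain rfl := antisymm_of s hxy (hrs y x hyx)
    exact refl_of r x

end DownSets

section MaxChain

variable {X : Type*} {φ : Set X → Set X}

lemma sUnion_closed_of_isChain (hφ : IsClosureOp φ) (halg : IsAlgebraicOp φ) (h0 : φ ∅ = ∅)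
    {S : Set (Set X)} (hS : IsChain (· ⊆ ·) S) (hcl : ∀ M ∈ S, φ M = M) :
    φ (⋃₀ S) = ⋃₀ S := by
  obtain rfl | hne := S.eq_empty_or_nonempty
  · simpa using h0
  refine Set.Subset.antisymm ?_ (hφ.1 _)
  rw [halg]
  rintro x ⟨_, ⟨B, hBS, hB, rfl⟩, hx⟩
  obtain ⟨M, hM, hBM⟩ := hS.directedOn.exists_mem_subset_of_finite_of_subset_sUnion hne hB hBS
  exact ⟨M, hM, hcl M hM ▸ hφ.2.1 B M hBM hx⟩

lemma exists_isMaxChainOfClosed (φ : Set X → Set X) : ∃ C, IsMaxChainOfClosed φ C := by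
  obtain ⟨c, hc, -⟩ :=
    (IsChain.empty (r := fun A B : {Y : Set X // φ Y = Y} => A.1 ⊆ B.1)).exists_maxChain
  refine ⟨Subtype.val '' c, ?_, hc.1.image_of_map_rel _ _ Subtype.val fun _ _ h => h, fun T hT hcomp => ?_⟩
  · rintro _ ⟨A, -, rfl⟩
    exact A.2
  · have hins : IsChain (fun A B : {Y : Set X // φ Y = Y} => A.1 ⊆ B.1) (insert ⟨T, hT⟩ c) :=
      hc.1.insert fun B hB _ => hcomp B.1 ⟨B, hB, rfl⟩
    exact ⟨⟨T, hT⟩, hc.2 hins (Set.subset_insert _ _) ▸ Set.mem_insert _ _, rfl⟩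

def chainLE (C : Set (Set X)) (x y : X) : Prop :=
  ∀ M ∈ C, y ∈ M → x ∈ M

def chainBelow (C : Set (Set X)) (x : X) : Set X :=
  ⋃₀ {M ∈ C | x ∉ M}

variable {C : Set (Set X)}

lemma not_mem_chainBelow (x : X) : x ∉ chainBelow C x := by
  rintro ⟨M, ⟨-, hxM⟩, hx⟩
  exact hxM hx

lemma chainBelow_subset (hC : IsChain (· ⊆ ·) C) {M : Set X} (hM : M ∈ C) {x : X}
    (hx : x ∈ M) : chainBelow C x ⊆ M := by
  refine Set.sUnion_subset fun N ⟨hN, hxN⟩ => ?_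
  exact (hC.total hN hM).resolve_right fun hMN => hxN (hMN hx)

lemma chainBelow_closed (hφ : IsAlgConvexGeometry φ) (hC : IsMaxChainOfClosed φ C) (x : X) :
    φ (chainBelow C x) = chainBelow C x :=
  sUnion_closed_of_isChain hφ.1 hφ.2.1 hφ.2.2.1 (hC.2.1.mono (Set.sep_subset _ _))
    fun _ hM => hC.1 hM.1

lemma closure_chainBelow_union_mem (hφ : IsAlgConvexGeometry φ) (hC : IsMaxChainOfClosed φ C)
    {x z : X} (hxz : ∀ M ∈ C, x ∈ M ↔ z ∈ M) : φ (chainBelow C x ∪ {z}) ∈ C := by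
  obtain ⟨⟨hext, hmono, hidem⟩, -⟩ := hφ
  refine hC.2.2 _ (hidem _) fun M hM => ?_
  by_cases hxM : x ∈ M
  · left
    have hsub : chainBelow C x ∪ {z} ⊆ M :=
      Set.union_subset (chainBelow_subset hC.2.1 hM hxM)
        (Set.singleton_subset_iff.2 ((hxz M hM).1 hxM))
    exact hC.1 hM ▸ hmono _ _ hsub
  · right
    exact (Set.subset_sUnion_of_mem (S := {N ∈ C | x ∉ N}) ⟨hM, hxM⟩).trans (Set.subset_union_left.trans (hext _))

lemma isLinearOrder_chainLE (hφ : IsAlgConvexGeometry φ) (hC : IsMaxChainOfClosed φ C) :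
    IsLinearOrder X (chainLE C) where
  refl _ _ _ h := h
  trans _ _ _ hxy hyz M hM hz := hxy M hM (hyz M hM hz)
  total x y := by
    by_contra h
    simp only [chainLE, not_or, not_forall] at h
    obtain ⟨⟨M, hM, hyM, hxM⟩, N, hN, hxN, hyN⟩ := h
    obtain hMN | hNM := hC.2.1.total hM hN
    · exact hyN (hMN hyM)
    · exact hxM (hNM hxN)
  antisymm x y hxy hyx := by
    by_contra hne
    have hiff : ∀ M ∈ C, x ∈ M ↔ y ∈ M := fun M hM => ⟨hyx M hM, hxy M hM⟩
    have hext := hφ.1.1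
    -- both closures lie in `C`, hence neither separates `x` from `y`
    have hyx' : y ∈ φ (chainBelow C x ∪ {x}) :=
      (hiff _ (closure_chainBelow_union_mem hφ hC fun _ _ => Iff.rfl)).1 (hext _ (Or.inr rfl))
    have hxy' : x ∈ φ (chainBelow C x ∪ {y}) :=
      hxy _ (closure_chainBelow_union_mem hφ hC hiff) (hext _ (Or.inr rfl))
    exact hφ.2.2.2 x y _ hne (chainBelow_closed hφ hC x) (not_mem_chainBelow x) hxy' hyx'

lemma downSets_chainLE_subset (hφ : IsAlgConvexGeometry φ) (hC : IsMaxChainOfClosed φ C) :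
    downSets (chainLE C) ⊆ {Y | φ Y = Y} := by
  intro D hD
  refine Set.Subset.antisymm (fun x hx => ?_) (hφ.1.1 D)
  by_contra hxD
  have hDx : D ⊆ chainBelow C x := by
    intro d hd
    have : ¬ chainLE C x d := fun hxd => hxD (hD x d hxd hd)
    simp only [chainLE, not_forall] at this
    obtain ⟨M, hM, hdM, hxM⟩ := this
    exact ⟨M, ⟨hM, hxM⟩, hdM⟩
  exact not_mem_chainBelow x (chainBelow_closed hφ hC x ▸ hφ.1.2.1 _ _ hDx hx)

lemma exists_isLinearOrder_downSets_subset (hφ : IsAlgConvexGeometry φ) :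
    ∃ r : X → X → Prop, IsLinearOrder X r ∧ downSets r ⊆ {Y | φ Y = Y} := by
  obtain ⟨C, hC⟩ := exists_isMaxChainOfClosed φ
  exact ⟨chainLE C, isLinearOrder_chainLE hφ hC, downSets_chainLE_subset hφ hC⟩

end MaxChain

/-- The minimal elements of the poset of algebraic convex geometries on X are
exactly the families of down-sets of total orders on X. -/
theorem stmt15 {X : Type*} (F : Set (Set X)) :
    (IsACGFamily F ∧ ∀ G : Set (Set X), IsACGFamily G → G ⊆ F → G = F) ↔
      ∃ r : X → X → Prop, IsLinearOrder X r ∧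
        F = {A : Set X | ∀ x y, r x y → y ∈ A → x ∈ A} := by
  constructor
  · rintro ⟨⟨φ, hφ, rfl⟩, hmin⟩
    obtain ⟨r, hr, hsub⟩ := exists_isLinearOrder_downSets_subset hφ
    exact ⟨r, hr, (hmin _ isACGFamily_downSets hsub).symm⟩
  · rintro ⟨r, hr, rfl⟩
    refine ⟨isACGFamily_downSets, ?_⟩
    rintro G ⟨ψ, hψ, rfl⟩ hGF
    obtain ⟨s, hs, hsub⟩ := exists_isLinearOrder_downSets_subset hψ
    obtain rfl : s = r := eq_of_downSets_subset (hsub.trans hGF)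
    exact hGF.antisymm hsub
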